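/- arXiv:1304.1548 — 3 statements merged into one kernel-verified Lean document; each statement's English description precedes it below -/
import Mathlib

section
/- For every n-vertex graph G with edge density p and every constant formulation, the frequency x₃ of the 3-node path as an induced subgraph satisfies x₃ ≤ 3p(1−p) + c/n for some absolute constant c; in particular s(P₃,G) ≤ 3/4 + o(1) as n → ∞. -/
open scoped Classical

/-- The induced subgraph frequency `s(F,G)`: the probability that a uniformly random
`|V(F)|`-element subset of the vertices of `G` induces a subgraph isomorphic to `F`. -/
noncomputable def subgraphFreq {V W : Type*} [Fintype V] [Fintype W]
    (F : SimpleGraph V) (G : SimpleGraph W) : ℝ :=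
  (((Finset.univ : Finset W).powersetCard (Fintype.card V)).filter
      (fun S => Nonempty (G.induce (↑S : Set W) ≃g F))).card /
    ((Fintype.card W).choose (Fintype.card V))
/-- The four 3-vertex graphs, with 0, 1, 2, 3 edges respectively. -/
def E0 : SimpleGraph (Fin 3) := ⊥
def E1 : SimpleGraph (Fin 3) := SimpleGraph.fromRel (fun a b => a = 0 ∧ b = 1)
def P3 : SimpleGraph (Fin 3) :=
  SimpleGraph.fromRel (fun a b => (a = 0 ∧ b = 1) ∨ (a = 1 ∧ b = 2))
def E3 : SimpleGraph (Fin 3) := ⊤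

/-!
Count ordered induced paths `x – c – y` (`x ~ c ~ y`, `x ≁ y`). Each induced `P₃` gives two of
them, and for fixed `x` there are at most `d(x)(n - 1 - d(x))` choices of `c ∈ N(x)` and
`y ∉ N(x) ∪ {x}`, so `2·#P₃ ≤ (n - 1)∑d - ∑d²`. Cauchy–Schwarz, `(∑d)² ≤ n∑d²`, together with
`∑d = p·n(n - 1)` turns this into `2·#P₃ ≤ p(1 - p)·n(n - 1)²`, that is
`s(P₃,G) ≤ 3p(1 - p)(n - 1)/(n - 2) ≤ 3p(1 - p) + 3/n`.
-/

open Finset SimpleGraph Fintype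

theorem Nat.cast_choose_three {K : Type*} [Field K] [CharZero K] (n : ℕ) :
    (n.choose 3 : K) = n * (n - 1) * (n - 2) / 6 := by
  rcases lt_or_ge n 3 with h | h
  · rw [Nat.choose_eq_zero_of_lt h]
    interval_cases n <;> norm_num
  · obtain ⟨k, rfl⟩ := Nat.exists_eq_add_of_le' h
    have hdesc := congrArg (Nat.cast : ℕ → K) (Nat.descFactorial_eq_factorial_mul_choose (k + 3) 3)
    simp only [Nat.descFactorial, Nat.factorial] at hdesc
    push_cast at hdesc ⊢
    linear_combination -hdesc / 6

namespace SimpleGraph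

variable {V W : Type*} [Fintype V]

noncomputable def inducedCopies [Fintype W] (F : SimpleGraph V) (G : SimpleGraph W) :
    Finset (Finset W) :=
  (univ.powersetCard (card V)).filter fun S : Finset W => Nonempty (G.induce (S : Set W) ≃g F)

/-- `subgraphFreq` filters the `k`-subsets only after coercing them into `Finset (Set W)`. -/
theorem subgraphFreq_eq [Fintype W] (F : SimpleGraph V) (G : SimpleGraph W) :
    subgraphFreq F G = #(inducedCopies F G) / (card W).choose (card V) := by
  have h : (univ.powersetCard (card V) >>= fun S : Finset W => pure (SetLike.coe S) :
      Finset (Set W)) =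
      (univ.powersetCard (card V)).image SetLike.coe := sup_singleton_apply _ _
  rw [subgraphFreq, h, filter_image, card_image_of_injective _ coe_injective]
  rfl

theorem nonempty_induce_iso_top_iff {G : SimpleGraph W} {s : Finset W} :
    Nonempty (G.induce (s : Set W) ≃g (⊤ : SimpleGraph V)) ↔ G.IsNClique (card V) s := by
  rw [isNClique_iff, ← induce_eq_top]
  constructor
  · rintro ⟨e⟩
    refine ⟨?_, ?_⟩
    · ext x y
      rw [← e.map_adj_iff, top_adj, top_adj, e.injective.ne_iff]
    · simpa using card_congr e.toEquiv
  · rintro ⟨h, hs⟩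
    rw [h]
    exact ⟨Iso.completeGraph (equivOfCardEq (by simpa using hs))⟩

theorem card_cliqueFinset_two [DecidableEq V] (G : SimpleGraph V) [DecidableRel G.Adj] :
    #(G.cliqueFinset 2) = #G.edgeFinset := by
  symm
  refine card_bij (fun e _ => e.toFinset) ?_ ?_ ?_
  · intro e he
    induction e with | h a b => ?_
    rw [mem_edgeFinset, mem_edgeSet] at he
    rw [Sym2.toFinset_mk_eq, mem_cliqueFinset_iff, isNClique_iff, coe_pair, isClique_pair,
      card_pair_eq_two_iff]
    exact ⟨fun _ => he, he.ne⟩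
  · intro e _ e' _ h
    exact Sym2.ext fun x => by rw [← Sym2.mem_toFinset, h, Sym2.mem_toFinset]
  · intro s hs
    rw [mem_cliqueFinset_iff, isNClique_iff, card_eq_two] at hs
    obtain ⟨hs, a, b, hab, rfl⟩ := hs
    exact ⟨s(a, b), by simpa using hs (by simp) (by simp) hab, Sym2.toFinset_mk_eq⟩

theorem inducedCopies_top [Fintype W] [DecidableEq V] (G : SimpleGraph V)
    [DecidableRel G.Adj] :
    inducedCopies (⊤ : SimpleGraph W) G = G.cliqueFinset (card W) := by
  ext s
  simp only [inducedCopies, mem_filter, mem_powersetCard, nonempty_induce_iso_top_iff,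
    mem_cliqueFinset_iff, subset_univ, true_and, and_iff_right_iff_imp]
  exact IsNClique.card_eq

theorem subgraphFreq_top_fin_two (G : SimpleGraph V) [DecidableRel G.Adj] :
    subgraphFreq (⊤ : SimpleGraph (Fin 2)) G =
      (∑ v, (G.degree v : ℝ)) / (card V * (card V - 1)) := by
  classical
  rw [subgraphFreq_eq, inducedCopies_top, Fintype.card_fin, card_cliqueFinset_two,
    Nat.cast_choose_two, ← Nat.cast_sum, sum_degrees_eq_twice_card_edges, div_div_eq_mul_div]
  push_cast
  ring

variable [DecidableEq V] (G : SimpleGraph V) [DecidableRel G.Adj]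

def inducedPathTriples : Finset (V × V × V) :=
  {t | G.Adj t.1 t.2.1 ∧ G.Adj t.2.1 t.2.2 ∧ t.1 ≠ t.2.2 ∧ ¬G.Adj t.1 t.2.2}

@[simp]
theorem mem_inducedPathTriples {x c y : V} :
    (x, c, y) ∈ G.inducedPathTriples ↔ G.Adj x c ∧ G.Adj c y ∧ x ≠ y ∧ ¬G.Adj x y := by
  simp [inducedPathTriples]

theorem card_inducedPathTriples_le :
    #G.inducedPathTriples ≤ ∑ x, G.degree x * (card V - 1 - G.degree x) := by
  have hsub : G.inducedPathTriples ⊆ univ.biUnion fun x =>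
      {x} ×ˢ (G.neighborFinset x ×ˢ (insert x (G.neighborFinset x))ᶜ) := by
    rintro ⟨x, c, y⟩ h
    rw [mem_inducedPathTriples] at h
    simp [h.1, h.2.2.1.symm, h.2.2.2]
  refine (card_le_card hsub).trans (card_biUnion_le.trans (sum_le_sum fun x _ => ?_))
  rw [card_product, card_product, card_singleton, one_mul, card_compl,
    card_insert_of_notMem (G.notMem_neighborFinset_self x), card_neighborFinset_eq_degree,
    Nat.sub_add_eq, Nat.sub_right_comm]

theorem exists_mem_inducedPathTriples {s : Finset V}
    (h : Nonempty (G.induce (s : Set V) ≃g P3)) :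
    ∃ x c y, (x, c, y) ∈ G.inducedPathTriples ∧ s = {x, c, y} := by
  obtain ⟨e⟩ := h
  have hadj : ∀ i j, G.Adj (e.symm i) (e.symm j) ↔ P3.Adj i j := fun i j => e.symm.map_adj_iff
  refine ⟨e.symm 0, e.symm 1, e.symm 2, ?_, ?_⟩
  · simp only [mem_inducedPathTriples, hadj, ne_eq, Subtype.coe_inj, e.symm.injective.eq_iff]
    simp [P3]
  · ext z
    simp only [mem_insert, mem_singleton]
    refine ⟨fun hz => ?_, ?_⟩
    · obtain ⟨i, hi⟩ := e.symm.surjective ⟨z, hz⟩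
      obtain rfl : (e.symm i : V) = z := congrArg Subtype.val hi
      fin_cases i <;> simp
    · rintro (rfl | rfl | rfl) <;> exact (e.symm _).2

theorem two_mul_card_inducedCopies_P3_le :
    2 * #(inducedCopies P3 G) ≤ #G.inducedPathTriples := by
  have := card_mul_le_card_mul (fun (s : Finset V) (t : V × V × V) => s = {t.1, t.2.1, t.2.2})
    (m := 2) (n := 1) (s := inducedCopies P3 G) (t := G.inducedPathTriples) ?_ ?_
  · simpa [mul_comm] using this
  · intro s hs
    simp only [inducedCopies, mem_filter] at hs
    obtain ⟨x, c, y, hxcy, rfl⟩ := G.exists_mem_inducedPathTriples hs.2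
    obtain ⟨hxc, hcy, hxy, hnxy⟩ := G.mem_inducedPathTriples.1 hxcy
    have hycx : (y, c, x) ∈ G.inducedPathTriples :=
      G.mem_inducedPathTriples.2 ⟨hcy.symm, hxc.symm, hxy.symm, fun h => hnxy h.symm⟩
    calc 2 = #{(x, c, y), (y, c, x)} := by simp [hxy]
      _ ≤ _ := card_le_card <| by
        refine insert_subset_iff.2 ⟨mem_filter.2 ⟨hxcy, rfl⟩,
          singleton_subset_iff.2 (mem_filter.2 ⟨hycx, ?_⟩)⟩
        ext; simp only [mem_insert, mem_singleton]; tauto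
  · intro t _
    exact card_le_one.2 fun a ha b hb =>
      (mem_bipartiteBelow _).1 ha |>.2.trans ((mem_bipartiteBelow _).1 hb).2.symm

theorem two_mul_card_inducedCopies_P3_le_sum_degree :
    2 * (#(inducedCopies P3 G) : ℝ) ≤
      (card V - 1) * ∑ v, (G.degree v : ℝ) - ∑ v, (G.degree v : ℝ) ^ 2 := by
  have hsub : ∀ v, ((card V - 1 - G.degree v : ℕ) : ℝ) = card V - 1 - G.degree v := fun v => by
    have := G.degree_lt_card_verts v
    rw [Nat.cast_sub (by omega), Nat.cast_sub (by omega), Nat.cast_one]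
  calc 2 * (#(inducedCopies P3 G) : ℝ)
      ≤ ∑ v, ((G.degree v * (card V - 1 - G.degree v) : ℕ) : ℝ) := by
        exact_mod_cast (G.two_mul_card_inducedCopies_P3_le).trans G.card_inducedPathTriples_le
    _ = _ := by
        rw [mul_sum, ← sum_sub_distrib]
        exact sum_congr rfl fun v _ => by rw [Nat.cast_mul, hsub]; ring

end SimpleGraph

/-- Here `P`, `D`, `Q` stand for `#(induced P₃)`, `∑ deg` and `∑ deg²`. -/
theorem path_density_le {n P D Q : ℝ} (hn : 3 ≤ n) (hP : 2 * P ≤ (n - 1) * D - Q)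
    (hQ : D ^ 2 ≤ n * Q) :
    P / (n * (n - 1) * (n - 2) / 6) ≤
      3 * (D / (n * (n - 1))) * (1 - D / (n * (n - 1))) + 3 / n := by
  have hn0 : 0 < n := by linarith
  have hn1 : 0 < n - 1 := by linarith
  have hn2 : 0 < n - 2 := by linarith
  set p := D / (n * (n - 1))
  have hD : D = p * (n * (n - 1)) := by
    rw [div_mul_cancel₀ _ (by positivity)]
  have h2P : 2 * P ≤ p * (1 - p) * (n * (n - 1) ^ 2) := by
    have : 2 * P * n ≤ p * (1 - p) * (n * (n - 1) ^ 2) * n := by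
      rw [hD] at hP hQ; nlinarith
    exact le_of_mul_le_mul_right this hn0
  have hq : p * (1 - p) ≤ 1 / 4 := by nlinarith [sq_nonneg (p - 1 / 2)]
  rw [div_le_iff₀ (by positivity)]
  have h3 : 3 / n * (n * (n - 1) * (n - 2) / 6) = (n - 1) * (n - 2) / 2 := by
    field_simp; norm_num
  nlinarith [mul_nonneg (sub_nonneg.2 hq) (mul_pos hn0 hn1).le,
    mul_nonneg (by linarith : (0:ℝ) ≤ 3 * n - 8) hn1.le]

/-- There is an absolute constant `c` such that for every n-vertex graph `G` (n ≥ 3)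
with edge density `p`, the induced frequency of the 3-node path satisfies
`s(P₃,G) ≤ 3p(1-p) + c/n`; in particular `s(P₃,G) ≤ 3/4 + c/n = 3/4 + o(1)`. -/
theorem stmt5 : ∃ c : ℝ, ∀ (n : ℕ), 3 ≤ n → ∀ G : SimpleGraph (Fin n),
    subgraphFreq P3 G ≤
        3 * subgraphFreq (⊤ : SimpleGraph (Fin 2)) G *
          (1 - subgraphFreq (⊤ : SimpleGraph (Fin 2)) G) + c / n ∧
    subgraphFreq P3 G ≤ 3/4 + c / n := by
  refine ⟨3, fun n hn G => ?_⟩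
  have hP := G.two_mul_card_inducedCopies_P3_le_sum_degree
  have hQ := sq_sum_le_card_mul_sum_sq (s := univ) (f := fun v => (G.degree v : ℝ))
  simp only [card_univ, Fintype.card_fin] at hP hQ
  have hdens : subgraphFreq P3 G ≤
      3 * subgraphFreq (⊤ : SimpleGraph (Fin 2)) G *
        (1 - subgraphFreq (⊤ : SimpleGraph (Fin 2)) G) + 3 / n := by
    rw [subgraphFreq_eq, subgraphFreq_top_fin_two, Fintype.card_fin, Fintype.card_fin,
      Nat.cast_choose_three]
    exact path_density_le (by exact_mod_cast hn) hP hQ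
  exact ⟨hdens, hdens.trans <| by
    nlinarith [sq_nonneg (subgraphFreq (⊤ : SimpleGraph (Fin 2)) G - 1 / 2)]⟩
end

section
/- For even n, the induced subgraph frequency of the 3-vertex path in the complete balanced bipartite graph K_{n/2,n/2} tends to 3/4 as n → ∞ (and the edge density tends to 1/2), so the upper bound 3/4 on the asymptotic frequency of the 3-node path is tight. -/
open scoped Classical

/-!
A vertex set of `K_{m,m}` with `k ≥ 1` elements induces a graph with an edge only if it meets
both sides, and conversely a 2-set meeting both sides is an edge, while a 3-set meeting both sides
is an induced path whose ends are the two vertices on the same side. Hence the frequency of `P₃`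
(resp. of an edge) is `1 - 2 C(m,k) / C(2m,k)` for `k = 3` (resp. `k = 2`), and
`C(n,k) ~ n^k / k!` makes this tend to `1 - 2^(1-k)`.
-/

open Filter Topology Asymptotics Finset

lemma subgraphFreq_eq_card_div {V W : Type*} [Fintype V] [Fintype W]
    (F : SimpleGraph V) (G : SimpleGraph W) :
    subgraphFreq F G = ((powersetCard (Fintype.card V) (univ : Finset W)).filter
      fun S : Finset W => Nonempty (G.induce (S : Set W) ≃g F)).card /
        (Fintype.card W).choose (Fintype.card V) := by
  have : (powersetCard (Fintype.card V) univ >>= fun S : Finset W => pure (S : Set W)) =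
      (powersetCard (Fintype.card V) univ).image ((↑) : Finset W → Set W) :=
    sup_singleton_apply _ _
  rw [subgraphFreq, this, filter_image, card_image_of_injective _ coe_injective]

section InducedCopies

variable {V W : Type*} {F : SimpleGraph V} {G : SimpleGraph W}

lemma nonempty_induce_iso_of_range_eq (f : F ↪g G) {s : Set W} (hs : Set.range f = s) :
    Nonempty (G.induce s ≃g F) :=
  hs ▸ ⟨f.isoInduceRange.symm⟩

lemma exists_adj_of_induce_iso {s : Set W} (e : G.induce s ≃g F) {i j : V} (h : F.Adj i j) :
    ∃ x ∈ s, ∃ y ∈ s, G.Adj x y :=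
  ⟨_, (e.symm i).2, _, (e.symm j).2, e.symm.map_rel_iff.2 h⟩

lemma nonempty_induce_pair_iso_top {u v : W} (h : G.Adj u v) :
    Nonempty (G.induce {u, v} ≃g (⊤ : SimpleGraph (Fin 2))) := by
  have hinj : Function.Injective ![u, v] := by
    intro i j; fin_cases i <;> fin_cases j <;> simp [h.ne, h.ne.symm]
  refine nonempty_induce_iso_of_range_eq ⟨⟨![u, v], hinj⟩, fun {i j} => ?_⟩
    (Matrix.range_cons_cons_empty u v ![])
  fin_cases i <;> fin_cases j <;> simp [h, h.symm]

lemma nonempty_induce_triple_iso_P3 {u v w : W} (huv : G.Adj u v) (hvw : G.Adj v w)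
    (huw : ¬ G.Adj u w) (hne : u ≠ w) :
    Nonempty (G.induce {u, v, w} ≃g P3) := by
  have hwu : ¬ G.Adj w u := fun h => huw h.symm
  have hinj : Function.Injective ![u, v, w] := by
    intro i j
    fin_cases i <;> fin_cases j <;> simp [huv.ne, huv.ne.symm, hvw.ne, hvw.ne.symm, hne, hne.symm]
  refine nonempty_induce_iso_of_range_eq ⟨⟨![u, v, w], hinj⟩, fun {i j} => ?_⟩
    (by
      rw [RelEmbedding.coe_mk, Function.Embedding.coeFn_mk, Matrix.range_cons,
        Matrix.range_cons_cons_empty, Set.singleton_union])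
  fin_cases i <;> fin_cases j <;>
    simp [P3, SimpleGraph.fromRel_adj, huv, hvw, huv.symm, hvw.symm, huw, hwu]

end InducedCopies

section CompleteBipartite

variable {V α β : Type*}

lemma toLeft_nonempty_and_toRight_nonempty_of_completeBipartiteGraph_induce_iso
    {F : SimpleGraph V} {i j : V} (hij : F.Adj i j) {S : Finset (α ⊕ β)}
    (e : (completeBipartiteGraph α β).induce (S : Set (α ⊕ β)) ≃g F) :
    S.toLeft.Nonempty ∧ S.toRight.Nonempty := by
  obtain ⟨x, hx, y, hy, hxy⟩ := exists_adj_of_induce_iso e hij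
  rcases x with a | b <;> rcases y with a' | b' <;> simp at hxy
  · exact ⟨⟨a, mem_toLeft.2 hx⟩, ⟨b', mem_toRight.2 hy⟩⟩
  · exact ⟨⟨a', mem_toLeft.2 hy⟩, ⟨b, mem_toRight.2 hx⟩⟩

lemma completeBipartiteGraph_nonempty_induce_iso_top_iff {S : Finset (α ⊕ β)} (hS : #S = 2) :
    Nonempty ((completeBipartiteGraph α β).induce (S : Set (α ⊕ β)) ≃g
        (⊤ : SimpleGraph (Fin 2))) ↔
      S.toLeft.Nonempty ∧ S.toRight.Nonempty := by
  refine ⟨fun ⟨e⟩ => toLeft_nonempty_and_toRight_nonempty_of_completeBipartiteGraph_induce_iso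
    (i := 0) (j := 1) (by simp) e, fun ⟨⟨a, ha⟩, ⟨b, hb⟩⟩ => ?_⟩
  have hsub : {.inl a, .inr b} ⊆ S :=
    insert_subset (mem_toLeft.1 ha) (singleton_subset_iff.2 (mem_toRight.1 hb))
  rw [← eq_of_subset_of_card_le hsub (by simp [hS]), coe_pair]
  exact nonempty_induce_pair_iso_top (by simp)

lemma completeBipartiteGraph_nonempty_induce_iso_P3_iff {S : Finset (α ⊕ β)} (hS : #S = 3) :
    Nonempty ((completeBipartiteGraph α β).induce (S : Set (α ⊕ β)) ≃g P3) ↔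
      S.toLeft.Nonempty ∧ S.toRight.Nonempty := by
  refine ⟨fun ⟨e⟩ => toLeft_nonempty_and_toRight_nonempty_of_completeBipartiteGraph_induce_iso
    (i := 0) (j := 1) (by simp [P3]) e, fun ⟨⟨a, ha⟩, ⟨b, hb⟩⟩ => ?_⟩
  have hsub : {.inl a, .inr b} ⊆ S :=
    insert_subset (mem_toLeft.1 ha) (singleton_subset_iff.2 (mem_toRight.1 hb))
  have hab : #({.inl a, .inr b} : Finset (α ⊕ β)) = 2 := card_pair Sum.inl_ne_inr
  obtain ⟨z, hzS, hz⟩ := exists_mem_notMem_of_card_lt_card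
    (by omega : #({.inl a, .inr b} : Finset (α ⊕ β)) < #S)
  have hS' : insert z {.inl a, .inr b} = S :=
    eq_of_subset_of_card_le (insert_subset hzS hsub) (by rw [card_insert_of_notMem hz]; omega)
  rw [← hS', coe_insert, coe_pair]
  rcases z with c | c
  · rw [Set.pair_comm]
    exact nonempty_induce_triple_iso_P3 (by simp) (by simp) (by simp) (by simp_all)
  · exact nonempty_induce_triple_iso_P3 (by simp) (by simp) (by simp) (by simp_all)

end CompleteBipartite

lemma card_powersetCard_filter_toLeft_nonempty_and_toRight_nonempty {α β : Type*} [Fintype α]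
    [Fintype β] {k : ℕ} (hk : k ≠ 0) :
    #{S ∈ powersetCard k (univ : Finset (α ⊕ β)) | S.toLeft.Nonempty ∧ S.toRight.Nonempty} +
      ((Fintype.card α).choose k + (Fintype.card β).choose k) =
        (Fintype.card α + Fintype.card β).choose k := by
  have hsplit : {S ∈ powersetCard k (univ : Finset (α ⊕ β)) |
      ¬(S.toLeft.Nonempty ∧ S.toRight.Nonempty)} =
      powersetCard k (univ.map .inl) ∪ powersetCard k (univ.map .inr) := by
    ext S
    simp only [mem_filter, mem_powersetCard, mem_union, subset_map_inl, subset_map_inr,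
      subset_univ, true_and, not_and_or, not_nonempty_iff_eq_empty]
    tauto
  have hdisj : Disjoint (powersetCard k (univ.map (.inl : α ↪ α ⊕ β)))
      (powersetCard k (univ.map .inr)) := by
    refine disjoint_left.2 fun S hl hr => hk ?_
    rw [mem_powersetCard, subset_map_inl] at hl
    rw [mem_powersetCard, subset_map_inr] at hr
    rw [← hl.2, ← card_toLeft_add_card_toRight, hl.1.2, hr.1.1, Finset.card_empty,
      Finset.card_empty]
  have h := card_filter_add_card_filter_not (s := powersetCard k (univ : Finset (α ⊕ β)))
    fun S => S.toLeft.Nonempty ∧ S.toRight.Nonempty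
  rwa [hsplit, card_union_of_disjoint hdisj, card_powersetCard, card_powersetCard,
    card_powersetCard, card_map, card_map, card_univ, card_univ, card_univ,
    Fintype.card_sum] at h

lemma subgraphFreq_completeBipartiteGraph {V α β : Type*} [Fintype V] [Fintype α] [Fintype β]
    {F : SimpleGraph V} (hV : Fintype.card V ≠ 0)
    (hF : ∀ S : Finset (α ⊕ β), #S = Fintype.card V →
      (Nonempty ((completeBipartiteGraph α β).induce (S : Set (α ⊕ β)) ≃g F) ↔
        S.toLeft.Nonempty ∧ S.toRight.Nonempty)) :
    subgraphFreq F (completeBipartiteGraph α β) =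
      ((Fintype.card α + Fintype.card β).choose (Fintype.card V) -
        (Fintype.card α).choose (Fintype.card V) -
          (Fintype.card β).choose (Fintype.card V) : ℝ) /
        (Fintype.card α + Fintype.card β).choose (Fintype.card V) := by
  rw [subgraphFreq_eq_card_div, filter_congr fun S hS => hF S (mem_powersetCard_univ.1 hS),
    Fintype.card_sum, ← card_powersetCard_filter_toLeft_nonempty_and_toRight_nonempty hV]
  push_cast
  ring

lemma tendsto_choose_div_choose_add_self (k : ℕ) :
    Tendsto (fun m : ℕ => (m.choose k : ℝ) / (m + m).choose k) atTop (𝓝 ((1 / 2) ^ k)) := by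
  have hdouble : Tendsto (fun m : ℕ => m + m) atTop atTop :=
    tendsto_atTop_mono (fun m => Nat.le_add_right m m) tendsto_id
  have hequiv := (isEquivalent_choose k).div ((isEquivalent_choose k).comp_tendsto hdouble)
  refine hequiv.symm.tendsto_nhds (tendsto_const_nhds.congr' ?_)
  filter_upwards [eventually_ne_atTop 0] with m hm
  have hm₀ : (m : ℝ) ≠ 0 := Nat.cast_ne_zero.2 hm
  simp only [Pi.div_apply, Function.comp_apply, Nat.cast_add]
  rw [← two_mul, mul_pow, div_pow, one_pow]
  field_simp

lemma tendsto_subgraphFreq_completeBipartiteGraph_fin {V : Type*} [Fintype V]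
    {F : SimpleGraph V} (hV : Fintype.card V ≠ 0)
    (hF : ∀ m, ∀ S : Finset (Fin m ⊕ Fin m), #S = Fintype.card V →
      (Nonempty ((completeBipartiteGraph (Fin m) (Fin m)).induce (S : Set (Fin m ⊕ Fin m)) ≃g
          F) ↔
        S.toLeft.Nonempty ∧ S.toRight.Nonempty)) :
    Tendsto (fun m : ℕ => subgraphFreq F (completeBipartiteGraph (Fin m) (Fin m))) atTop
      (𝓝 (1 - 2 * (1 / 2) ^ Fintype.card V)) := by
  refine (((tendsto_choose_div_choose_add_self _).const_mul 2).const_sub 1).congr' ?_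
  filter_upwards [eventually_ge_atTop (Fintype.card V)] with m hm
  have hchoose : ((m + m).choose (Fintype.card V) : ℝ) ≠ 0 := by
    exact_mod_cast (Nat.choose_pos (by omega)).ne'
  rw [subgraphFreq_completeBipartiteGraph hV (hF m), Fintype.card_fin]
  field_simp
  ring

/-- In the complete balanced bipartite graphs `K_{m,m}` (i.e. `K_{n/2,n/2}` for even
`n = 2m`), the induced frequency of the 3-vertex path tends to `3/4` as `m → ∞`,
while the edge density tends to `1/2`: the bound `3/4` is asymptotically tight. -/
theorem stmt6 :
    Filter.Tendsto
      (fun m : ℕ => subgraphFreq P3 (completeBipartiteGraph (Fin m) (Fin m)))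
      Filter.atTop (nhds (3/4)) ∧
    Filter.Tendsto
      (fun m : ℕ => subgraphFreq (⊤ : SimpleGraph (Fin 2))
        (completeBipartiteGraph (Fin m) (Fin m)))
      Filter.atTop (nhds (1/2)) := by
  constructor
  · convert tendsto_subgraphFreq_completeBipartiteGraph_fin (F := P3) (by simp)
      fun m S hS => completeBipartiteGraph_nonempty_induce_iso_P3_iff hS using 2
    norm_num
  · convert tendsto_subgraphFreq_completeBipartiteGraph_fin (F := (⊤ : SimpleGraph (Fin 2)))
      (by simp) fun m S hS => completeBipartiteGraph_nonempty_induce_iso_top_iff hS using 2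
    norm_num
end

section
/- Let F be a graph that is neither complete nor empty. Then for every p ∈ [0,1] there exists a sequence of graphs G₁, G₂, … with |V(G_i)| → ∞, edge densities converging to p, and s(F,G_i) = 0 for all i (F appears in no G_i as an induced subgraph). -/
/-!
Call a graph a near-clique if its edges are exactly those of a clique on some vertex set `s`,
all other vertices being isolated. Induced subgraphs of near-cliques are near-cliques, and a
graph other than `⊤` and `⊥` is never a near-clique together with its complement. A
near-clique on `n` vertices with a clique of size `⌊√p n⌋` has edge density tending to `p`. So
if `F` is not a near-clique, these graphs avoid `F`; if it is, `Fᶜ` is not, and the complements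
of the near-cliques of density `1 - p` avoid `F`, because `F` is induced in `Gᶜ` iff `Fᶜ` is
induced in `G`.
-/

open scoped Classical

open Finset Filter Topology

namespace SimpleGraph

variable {V W : Type*}

def nearClique (s : Set V) : SimpleGraph V where
  Adj x y := x ≠ y ∧ x ∈ s ∧ y ∈ s
  symm := ⟨fun _ _ (h : _ ∧ _ ∧ _) => ⟨h.1.symm, h.2.2, h.2.1⟩⟩
  loopless := ⟨fun _ (h : _ ∧ _ ∧ _) => h.1 rfl⟩

@[simp]
theorem nearClique_adj {s : Set V} {x y : V} :
    (nearClique s).Adj x y ↔ x ≠ y ∧ x ∈ s ∧ y ∈ s :=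
  Iff.rfl

def IsNearClique (G : SimpleGraph V) : Prop :=
  ∃ s : Set V, G = nearClique s

theorem isNearClique_nearClique (s : Set V) : (nearClique s).IsNearClique :=
  ⟨s, rfl⟩

theorem IsNearClique.of_embedding {G : SimpleGraph V} {H : SimpleGraph W} (f : G ↪g H)
    (hH : H.IsNearClique) : G.IsNearClique := by
  obtain ⟨s, rfl⟩ := hH
  refine ⟨f ⁻¹' s, ?_⟩
  ext x y
  rw [← f.map_adj_iff, nearClique_adj, nearClique_adj, f.injective.ne_iff]
  rfl

theorem IsNearClique.not_compl {G : SimpleGraph V} (hG : G.IsNearClique) (h₁ : G ≠ ⊤)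
    (h₂ : G ≠ ⊥) : ¬ Gᶜ.IsNearClique := by
  rintro ⟨t, ht⟩
  obtain ⟨s, rfl⟩ := hG
  obtain ⟨x, y, hxy, hx, hy⟩ := ne_bot_iff_exists_adj.mp h₂
  obtain ⟨u, v, huv, hnadj⟩ := ne_top_iff_exists_not_adj.mp h₁
  -- some endpoint `w` of the non-edge lies outside `s`, so in the complement it is joined to both
  -- `x` and `y`, which puts `x, y` into the clique of the complement
  obtain ⟨w, hw⟩ : ∃ w, w ∉ s := by
    by_contra! h
    exact hnadj ⟨huv, h u, h v⟩
  have hadj (a b : V) : (nearClique t).Adj a b ↔ (nearClique s)ᶜ.Adj a b := by rw [ht]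
  have hcompl {z : V} (hz : z ∈ s) : (nearClique t).Adj w z :=
    (hadj w z).mpr ⟨fun h => hw (h ▸ hz), fun h => hw h.2.1⟩
  exact ((hadj x y).mp ⟨hxy, (hcompl hx).2.2, (hcompl hy).2.2⟩).2 ⟨hxy, hx, hy⟩

def Embedding.compl {G : SimpleGraph V} {H : SimpleGraph W} (f : G ↪g H) : Gᶜ ↪g Hᶜ where
  toEmbedding := f.toEmbedding
  map_rel_iff' {x y} := by
    simp only [compl_adj, RelEmbedding.coe_toEmbedding, f.map_adj_iff, f.injective.ne_iff]

theorem cliqueFinset_two_nearClique [Fintype V] [DecidableEq V] (s : Finset V) :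
    (nearClique (s : Set V)).cliqueFinset 2 = s.powersetCard 2 := by
  ext T
  rw [mem_cliqueFinset_iff, mem_powersetCard, isNClique_iff]
  refine ⟨fun ⟨hT, hcard⟩ => ⟨?_, hcard⟩, fun ⟨hTs, hcard⟩ => ⟨?_, hcard⟩⟩
  · obtain ⟨x, y, hxy, rfl⟩ := card_eq_two.mp hcard
    rw [coe_pair, isClique_pair] at hT
    obtain ⟨-, hx, hy⟩ := hT hxy
    exact insert_subset_iff.mpr ⟨hx, singleton_subset_iff.mpr hy⟩
  · intro x hx y hy hxy
    exact ⟨hxy, hTs hx, hTs hy⟩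

theorem card_cliqueFinset_two_add_compl [Fintype V] [DecidableEq V] (G : SimpleGraph V)
    [DecidableRel G.Adj] :
    #(G.cliqueFinset 2) + #(Gᶜ.cliqueFinset 2) = (Fintype.card V).choose 2 := by
  have hcompl : Gᶜ.cliqueFinset 2 =
      (univ.powersetCard 2).filter fun T : Finset V => ¬ G.IsClique (T : Set V) := by
    ext T
    simp only [mem_cliqueFinset_iff, isNClique_iff, mem_filter, mem_powersetCard, subset_univ,
      true_and]
    rw [and_comm]
    refine and_congr_right fun hcard => ?_
    obtain ⟨x, y, hxy, rfl⟩ := card_eq_two.mp hcard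
    rw [coe_pair, isClique_pair, isClique_pair, compl_adj]
    simp [hxy]
  have hG : G.cliqueFinset 2 =
      (univ.powersetCard 2).filter fun T : Finset V => G.IsClique (T : Set V) := by
    ext T
    simp [isNClique_iff, and_comm]
  rw [hG, hcompl, card_filter_add_card_filter_not, card_powersetCard, card_univ]

end SimpleGraph

open SimpleGraph

theorem subgraphFreq_eq_card_filter {V W : Type*} [Fintype V] [Fintype W]
    (F : SimpleGraph V) (G : SimpleGraph W) :
    subgraphFreq F G = #((univ.powersetCard (Fintype.card V)).filter
      fun S : Finset W => Nonempty (G.induce (S : Set W) ≃g F)) /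
        (Fintype.card W).choose (Fintype.card V) := by
  rw [subgraphFreq, bind_pure_comp, fmap_def, filter_image]
  congr 2
  exact card_image_of_injective _ SetLike.coe_injective

theorem subgraphFreq_top {W : Type*} [Fintype W] [DecidableEq W] (n : ℕ) (G : SimpleGraph W)
    [DecidableRel G.Adj] :
    subgraphFreq (⊤ : SimpleGraph (Fin n)) G =
      #(G.cliqueFinset n) / (Fintype.card W).choose n := by
  have hclique : (univ.powersetCard n).filter
      (fun S : Finset W => Nonempty (G.induce (S : Set W) ≃g (⊤ : SimpleGraph (Fin n))))
      = G.cliqueFinset n := by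
    ext S
    simp only [mem_filter, mem_powersetCard, subset_univ, true_and, mem_cliqueFinset_iff,
      isNClique_iff, ← induce_eq_top]
    rw [and_comm]
    refine and_congr_left fun hcard => ⟨fun ⟨e⟩ => ?_, fun h => ?_⟩
    · ext x y
      rw [← e.map_adj_iff, top_adj, top_adj, e.injective.ne_iff]
    · rw [h]
      exact ⟨Iso.completeGraph (Fintype.equivFinOfCardEq (by simp [hcard]))⟩
  rw [subgraphFreq_eq_card_filter, Fintype.card_fin, hclique]

theorem subgraphFreq_top_two_compl {W : Type*} [Fintype W] (G : SimpleGraph W)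
    (hW : 2 ≤ Fintype.card W) :
    subgraphFreq (⊤ : SimpleGraph (Fin 2)) Gᶜ =
      1 - subgraphFreq (⊤ : SimpleGraph (Fin 2)) G := by
  have hpos : ((Fintype.card W).choose 2 : ℝ) ≠ 0 := by
    exact_mod_cast (Nat.choose_pos hW).ne'
  have hsum :
      (#(Gᶜ.cliqueFinset 2) + #(G.cliqueFinset 2) : ℝ) = (Fintype.card W).choose 2 := by
    exact_mod_cast (add_comm _ _).trans (card_cliqueFinset_two_add_compl G)
  rw [subgraphFreq_top, subgraphFreq_top, eq_sub_iff_add_eq, ← add_div, hsum, div_self hpos]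

theorem subgraphFreq_eq_zero {V W : Type*} [Fintype V] [Fintype W] {F : SimpleGraph V}
    {G : SimpleGraph W} (h : IsEmpty (F ↪g G)) : subgraphFreq F G = 0 := by
  have hnone (S : Finset W) : ¬ Nonempty (G.induce (S : Set W) ≃g F) := fun ⟨e⟩ =>
    h.false ((Embedding.induce (S : Set W)).comp e.symm.toEmbedding)
  rw [subgraphFreq_eq_card_filter, filter_false_of_mem fun S _ => hnone S, card_empty,
    Nat.cast_zero, zero_div]

theorem tendsto_choose_two_div_choose_two {a : ℕ → ℕ} {r : ℝ}
    (ha : Tendsto (fun n => (a n : ℝ) / n) atTop (𝓝 r)) :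
    Tendsto (fun n => ((a n).choose 2 : ℝ) / n.choose 2) atTop (𝓝 (r ^ 2)) := by
  have hinv : Tendsto (fun n : ℕ => (n : ℝ)⁻¹) atTop (𝓝 0) :=
    tendsto_inv_atTop_zero.comp tendsto_natCast_atTop_atTop
  -- `C(a,2) / C(n,2) = (a/n) * ((a/n - 1/n) / (1 - 1/n))`
  have hlim := ha.mul ((ha.sub hinv).div (tendsto_const_nhds.sub hinv)
    (by norm_num : (1 : ℝ) - 0 ≠ 0))
  rw [sub_zero, sub_zero, div_one, ← sq] at hlim
  simp only [Pi.div_apply] at hlim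
  refine hlim.congr' ?_
  filter_upwards [eventually_ge_atTop 2] with n hn
  have hn₀ : (n : ℝ) ≠ 0 := by positivity
  have hn₁ : (n : ℝ) - 1 ≠ 0 := sub_ne_zero.mpr (by exact_mod_cast (by omega : n ≠ 1))
  rw [Nat.cast_choose_two, Nat.cast_choose_two]
  field_simp

def nearCliqueOfDensity (q : ℝ) (n : ℕ) : SimpleGraph (Fin n) :=
  nearClique (({i : Fin n | (i : ℕ) < ⌊√q * n⌋₊} : Finset (Fin n)) : Set (Fin n))

theorem tendsto_subgraphFreq_top_two_nearCliqueOfDensity {q : ℝ}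
    (hq : q ∈ Set.Icc (0 : ℝ) 1) :
    Tendsto (fun n => subgraphFreq (⊤ : SimpleGraph (Fin 2)) (nearCliqueOfDensity q n))
      atTop (𝓝 q) := by
  have hsize (n : ℕ) : min n ⌊√q * n⌋₊ = ⌊√q * n⌋₊ :=
    min_eq_right (Nat.floor_le_of_le (mul_le_of_le_one_left n.cast_nonneg
      (Real.sqrt_le_one.mpr hq.2)))
  have hratio : Tendsto (fun n : ℕ => (⌊√q * n⌋₊ : ℝ) / n) atTop (𝓝 √q) :=
    (tendsto_nat_floor_mul_div_atTop (Real.sqrt_nonneg q)).comp tendsto_natCast_atTop_atTop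
  have hlim := tendsto_choose_two_div_choose_two hratio
  rw [Real.sq_sqrt hq.1] at hlim
  refine hlim.congr fun n => ?_
  rw [nearCliqueOfDensity, subgraphFreq_top, cliqueFinset_two_nearClique,
    card_powersetCard, Fin.card_filter_val_lt, hsize, Fintype.card_fin]

/-- If a k-vertex graph `F` is neither complete nor empty, then for every edge density
`p ∈ [0,1]` there is a sequence of graphs with vertex counts tending to infinity,
edge densities converging to `p`, and containing no induced copy of `F`. -/
theorem stmt14 {k : ℕ} (F : SimpleGraph (Fin k)) (h1 : F ≠ ⊤) (h2 : F ≠ ⊥)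
    (p : ℝ) (hp : p ∈ Set.Icc (0:ℝ) 1) :
    ∃ (m : ℕ → ℕ) (G : ∀ i, SimpleGraph (Fin (m i))),
      Filter.Tendsto m Filter.atTop Filter.atTop ∧
      Filter.Tendsto (fun i => subgraphFreq (⊤ : SimpleGraph (Fin 2)) (G i))
        Filter.atTop (nhds p) ∧
      (∀ i, subgraphFreq F (G i) = 0) := by
  by_cases hF : F.IsNearClique
  · refine ⟨id, fun n => (nearCliqueOfDensity (1 - p) n)ᶜ, tendsto_id, ?_, fun n => ?_⟩
    · have hq : 1 - p ∈ Set.Icc (0 : ℝ) 1 := ⟨by linarith [hp.2], by linarith [hp.1]⟩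
      have hlim := tendsto_const_nhds (x := (1 : ℝ)).sub
        (tendsto_subgraphFreq_top_two_nearCliqueOfDensity hq)
      rw [sub_sub_cancel] at hlim
      refine hlim.congr' ?_
      filter_upwards [eventually_ge_atTop 2] with n hn
      rw [subgraphFreq_top_two_compl _ (by simpa using hn)]
    · refine subgraphFreq_eq_zero ⟨fun f => hF.not_compl h1 h2 ?_⟩
      have f' := f.compl
      rw [compl_compl] at f'
      exact (isNearClique_nearClique _).of_embedding f'
  · exact ⟨id, nearCliqueOfDensity p, tendsto_id,
      tendsto_subgraphFreq_top_two_nearCliqueOfDensity hp,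
      fun n => subgraphFreq_eq_zero
        ⟨fun f => hF ((isNearClique_nearClique _).of_embedding f)⟩⟩
end
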